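/- Under the conditional quantile model and IPCW assumptions, the population estimating function μ(β) = E[ Z·(N(t₀)/G(Y))·(1{Y ≥ t₀ − exp(β'Z)} − λ) ], where N(t₀) = 1{Y ≤ t₀, Δ=1}, satisfies μ(β⁰) = 0 at the true parameter β⁰. -/

import Mathlib

open MeasureTheory ProbabilityTheory
open scoped Classical

/-!
Since `C ⫫ Z` and `T ⫫ C | Z`, the censoring time `C` is independent of `(T, Z)`.
Integrating out `C` first, the weight `1{T ≤ C}` may therefore be replaced by `G(T)`
(inverse probability of censoring weighting). On `{Δ = 1}` we have `Y = T`, so `N(t₀)/G(Y)`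
becomes `1{T ≤ t₀}/G(T)` and the factor `G(T)` cancels:
`μ(β⁰) = E[Z (1{t₀ - T ≤ exp(β⁰'Z), T ≤ t₀} - λ 1{T ≤ t₀})]`.
Conditioning on `Z`, this vanishes by the quantile model.
-/

lemma setIntegral_condExp_indicator_one {Ω : Type*} {m mΩ : MeasurableSpace Ω} {μ : Measure Ω}
    (hm : m ≤ mΩ) [IsFiniteMeasure μ] {s r : Set Ω} (hs : MeasurableSet s)
    (hr : MeasurableSet[m] r) :
    ∫ ω in r, (μ⟦s | m⟧) ω ∂μ = μ.real (s ∩ r) := by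
  rw [setIntegral_condExp hm ((integrable_const 1).indicator hs) hr,
    integral_indicator_const _ hs, measureReal_restrict_apply hs, smul_eq_mul, mul_one]

lemma integral_sub_mul_smul_eq_zero_of_condExp {Ω E : Type*} {m mΩ : MeasurableSpace Ω}
    {μ : Measure Ω} [NormedAddCommGroup E] [NormedSpace ℝ E] [CompleteSpace E] (hm : m ≤ mΩ)
    [SigmaFinite (μ.trim hm)] {f g : Ω → ℝ} {c : ℝ} {X : Ω → E}
    (hX : AEStronglyMeasurable[m] X μ) (hf : Integrable f μ) (hg : Integrable g μ)
    (hfgX : Integrable (fun ω => (f ω - c * g ω) • X ω) μ)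
    (hfg : μ[f | m] =ᵐ[μ] fun ω => c * μ[g | m] ω) :
    ∫ ω, (f ω - c * g ω) • X ω ∂μ = 0 := by
  have hcg : Integrable (c • g) μ := hg.smul c
  rw [← integral_condExp hm]
  refine (integral_congr_ae ?_).trans (integral_zero Ω E)
  filter_upwards [condExp_smul_of_aestronglyMeasurable_right (hf.sub hcg) hfgX hX,
    condExp_sub hf hcg m, condExp_smul c g m, hfg] with ω hpull hsub hsmul hmodel
  refine hpull.trans ?_
  simp [hsub, hsmul, hmodel]

lemma antitone_measureReal_setOf_le {Ω : Type*} [MeasurableSpace Ω] (μ : Measure Ω)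
    [IsFiniteMeasure μ] (X : Ω → ℝ) : Antitone fun t => μ.real {ω | t ≤ X ω} :=
  fun _ _ hab => measureReal_mono fun _ h => hab.trans h

lemma integrableOn_of_integrable_norm_div {Ω E : Type*} [MeasurableSpace Ω] {μ : Measure Ω}
    [NormedAddCommGroup E] {X : Ω → E} {h : Ω → ℝ} {s : Set Ω}
    (hX : AEStronglyMeasurable X μ) (hint : Integrable (fun ω => ‖X ω‖ / h ω) μ)
    (hs : MeasurableSet s) (hh : ∀ ω ∈ s, 0 < h ω ∧ h ω ≤ 1) : IntegrableOn X s μ :=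
  hint.integrableOn.mono' hX.restrict (ae_restrict_of_forall_mem hs fun ω hω =>
    le_div_self (norm_nonneg _) (hh ω hω).1 (hh ω hω).2)

lemma integrable_indicator_sub_mul_indicator_smul {Ω E : Type*} [MeasurableSpace Ω]
    {μ : Measure Ω} [NormedAddCommGroup E] [NormedSpace ℝ E] {X : Ω → E} {A B : Set Ω}
    (hA : MeasurableSet A) (hB : MeasurableSet B) (hAB : A ⊆ B) (hX : IntegrableOn X B μ)
    (c : ℝ) :
    Integrable
      (fun ω => (A.indicator (fun _ => 1) ω - c * B.indicator (fun _ => 1) ω) • X ω) μ := by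
  refine (((hX.mono_set hAB).integrable_indicator hA).sub
    (Integrable.smul c (hX.integrable_indicator hB))).congr (.of_forall fun ω => ?_)
  by_cases hωA : ω ∈ A <;> by_cases hωB : ω ∈ B <;> simp [hωA, hωB, sub_smul]

section CondIndep

variable {Ω β γ δ : Type*} [MeasurableSpace Ω] [StandardBorelSpace Ω] [MeasurableSpace β]
  [MeasurableSpace γ] [MeasurableSpace δ] {μ : Measure Ω} [IsProbabilityMeasure μ]
  {f : Ω → β} {g : Ω → γ} {k : Ω → δ}

lemma measureReal_inter_preimage_eq_mul_of_condIndepFun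
    (hf : Measurable f) (hg : Measurable g) (hk : Measurable k)
    (hfg : CondIndepFun (MeasurableSpace.comap k inferInstance) hk.comap_le f g μ)
    (hgk : IndepFun g k μ) {s : Set β} {t : Set γ} {r : Set δ}
    (hs : MeasurableSet s) (ht : MeasurableSet t) (hr : MeasurableSet r) :
    μ.real (f ⁻¹' s ∩ k ⁻¹' r ∩ g ⁻¹' t) = μ.real (f ⁻¹' s ∩ k ⁻¹' r) * μ.real (g ⁻¹' t) := by
  have hkr : MeasurableSet[MeasurableSpace.comap k inferInstance] (k ⁻¹' r) := ⟨r, hr, rfl⟩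
  have hconst : μ⟦g ⁻¹' t | MeasurableSpace.comap k inferInstance⟧
      =ᵐ[μ] fun _ => μ.real (g ⁻¹' t) := by
    refine (condExp_indep_eq hg.comap_le hk.comap_le
      (stronglyMeasurable_const.indicator ⟨t, ht, rfl⟩)
      ((IndepFun_iff_Indep g k μ).mp hgk)).trans ?_
    exact .of_forall fun _ => integral_indicator_one (hg ht)
  have hprod := (condIndepFun_iff_condExp_inter_preimage_eq_mul hf hg).mp hfg s t hs ht
  calc μ.real (f ⁻¹' s ∩ k ⁻¹' r ∩ g ⁻¹' t)
      = ∫ ω in k ⁻¹' r,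
          (μ⟦f ⁻¹' s ∩ g ⁻¹' t | MeasurableSpace.comap k inferInstance⟧) ω ∂μ := by
        rw [setIntegral_condExp_indicator_one hk.comap_le ((hf hs).inter (hg ht)) hkr,
          Set.inter_right_comm]
    _ = ∫ ω in k ⁻¹' r, (μ⟦f ⁻¹' s | MeasurableSpace.comap k inferInstance⟧) ω
          * μ.real (g ⁻¹' t) ∂μ := by
        refine setIntegral_congr_ae (hk.comap_le _ hkr) ?_
        filter_upwards [hprod, hconst] with ω h1 h2 _
        rw [h1, h2]
    _ = μ.real (f ⁻¹' s ∩ k ⁻¹' r) * μ.real (g ⁻¹' t) := by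
        rw [integral_mul_const, setIntegral_condExp_indicator_one hk.comap_le (hf hs) hkr]

theorem indepFun_prodMk_of_condIndepFun
    (hf : Measurable f) (hg : Measurable g) (hk : Measurable k)
    (hfg : CondIndepFun (MeasurableSpace.comap k inferInstance) hk.comap_le f g μ)
    (hgk : IndepFun g k μ) :
    IndepFun (fun ω => (f ω, k ω)) g μ := by
  rw [indepFun_iff_map_prod_eq_prod_map_map (hf.prodMk hk).aemeasurable hg.aemeasurable]
  refine Measure.ext_prod₃' fun {s r t} hs hr ht => ?_
  rw [Measure.prod_prod, Measure.map_apply ((hf.prodMk hk).prodMk hg) ((hs.prod hr).prod ht),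
    Measure.map_apply (hf.prodMk hk) (hs.prod hr), Measure.map_apply hg ht]
  have h := measureReal_inter_preimage_eq_mul_of_condIndepFun hf hg hk hfg hgk hs ht hr
  rwa [measureReal_def, measureReal_def, measureReal_def, ← ENNReal.toReal_mul,
    ENNReal.toReal_eq_toReal_iff' (measure_ne_top _ _)
      (ENNReal.mul_ne_top (measure_ne_top _ _) (measure_ne_top _ _))] at h

end CondIndep

section IPCW

variable {Ω α E : Type*} [MeasurableSpace Ω] [MeasurableSpace α]
  [NormedAddCommGroup E] [NormedSpace ℝ E]

lemma ite_le_eq_indicator_Ici (t c : ℝ) :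
    (if t ≤ c then (1 : ℝ) else 0) = (Set.Ici t).indicator 1 c := by
  simp [Set.indicator_apply]

lemma integral_ite_le_smul [CompleteSpace E] (ν : Measure ℝ) [IsFiniteMeasure ν] (t : ℝ)
    (v : E) :
    ∫ c, (if t ≤ c then (1 : ℝ) else 0) • v ∂ν = ν.real (Set.Ici t) • v := by
  simp_rw [integral_smul_const, ite_le_eq_indicator_Ici, integral_indicator_one measurableSet_Ici]

lemma integrable_ite_le_smul (ν : Measure ℝ) [IsFiniteMeasure ν] (t : ℝ) (v : E) :
    Integrable (fun c => (if t ≤ c then (1 : ℝ) else 0) • v) ν := by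
  simp_rw [ite_le_eq_indicator_Ici]
  exact ((integrable_const 1).indicator measurableSet_Ici).smul_const v

lemma stronglyMeasurable_ite_le_smul {g : ℝ × α → E} (hg : StronglyMeasurable g) :
    StronglyMeasurable fun y : (ℝ × α) × ℝ => (if y.1.1 ≤ y.2 then (1 : ℝ) else 0) • g y.1 :=
  (Measurable.ite (measurableSet_le measurable_fst.fst measurable_snd) measurable_const
    measurable_const).stronglyMeasurable.smul (hg.comp_measurable measurable_fst)

lemma integral_prod_ite_le_smul [CompleteSpace E] {P : Measure (ℝ × α)} [SFinite P]
    {ν : Measure ℝ} [IsFiniteMeasure ν] {g : ℝ × α → E} (hg : StronglyMeasurable g)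
    (hint : Integrable (fun x => ν.real (Set.Ici x.1) • g x) P) :
    ∫ y, (if y.1.1 ≤ y.2 then (1 : ℝ) else 0) • g y.1 ∂(P.prod ν)
      = ∫ x, ν.real (Set.Ici x.1) • g x ∂P := by
  set F : (ℝ × α) × ℝ → E := fun y => (if y.1.1 ≤ y.2 then (1 : ℝ) else 0) • g y.1
  have hF : StronglyMeasurable F := stronglyMeasurable_ite_le_smul hg
  have hnorm : ∀ x, ‖ν.real (Set.Ici x.1) • g x‖ = ∫ c, ‖F (x, c)‖ ∂ν := fun x => by
    rw [norm_smul, Real.norm_of_nonneg measureReal_nonneg, ← smul_eq_mul,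
      ← integral_ite_le_smul]
    congr with c
    simp only [F, norm_smul]
    split_ifs <;> simp
  have hFint : Integrable F (P.prod ν) :=
    (integrable_prod_iff hF.aestronglyMeasurable).mpr
      ⟨.of_forall fun x => integrable_ite_le_smul ν x.1 (g x),
        hint.norm.congr (.of_forall hnorm)⟩
  rw [integral_prod F hFint]
  exact integral_congr_ae (.of_forall fun x => integral_ite_le_smul ν x.1 (g x))

theorem integral_ite_le_smul_eq_of_indepFun [CompleteSpace E] {μ : Measure Ω}
    [IsProbabilityMeasure μ] {T C : Ω → ℝ} {W : Ω → α}
    (hT : Measurable T) (hC : Measurable C) (hW : Measurable W)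
    (hindep : IndepFun (fun ω => (T ω, W ω)) C μ) {g : ℝ × α → E} (hg : StronglyMeasurable g)
    (hint : Integrable (fun ω => μ.real {ω' | T ω ≤ C ω'} • g (T ω, W ω)) μ) :
    ∫ ω, (if T ω ≤ C ω then (1 : ℝ) else 0) • g (T ω, W ω) ∂μ
      = ∫ ω, μ.real {ω' | T ω ≤ C ω'} • g (T ω, W ω) ∂μ := by
  set X : Ω → ℝ × α := fun ω => (T ω, W ω)
  have hX : Measurable X := hT.prodMk hW
  have hsurv : ∀ t, (μ.map C).real (Set.Ici t) = μ.real {ω' | t ≤ C ω'} := fun t => by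
    rw [map_measureReal_apply hC measurableSet_Ici]; rfl
  have hmeas : StronglyMeasurable fun x : ℝ × α => (μ.map C).real (Set.Ici x.1) • g x :=
    ((antitone_measureReal_setOf_le (μ.map C) id).measurable.comp
      measurable_fst).stronglyMeasurable.smul hg
  have hint' : Integrable (fun x => (μ.map C).real (Set.Ici x.1) • g x) (μ.map X) :=
    (integrable_map_measure hmeas.aestronglyMeasurable hX.aemeasurable).mpr
      (by simpa only [Function.comp_def, hsurv] using hint)
  calc ∫ ω, (if T ω ≤ C ω then (1 : ℝ) else 0) • g (T ω, W ω) ∂μ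
      = ∫ y, (if y.1.1 ≤ y.2 then (1 : ℝ) else 0) • g y.1 ∂((μ.map X).prod (μ.map C)) := by
        rw [← (indepFun_iff_map_prod_eq_prod_map_map hX.aemeasurable hC.aemeasurable).mp hindep,
          integral_map (hX.prodMk hC).aemeasurable
            (stronglyMeasurable_ite_le_smul hg).aestronglyMeasurable]
    _ = ∫ x, (μ.map C).real (Set.Ici x.1) • g x ∂(μ.map X) := integral_prod_ite_le_smul hg hint'
    _ = ∫ ω, μ.real {ω' | T ω ≤ C ω'} • g (T ω, W ω) ∂μ := by
        rw [integral_map hX.aemeasurable hmeas.aestronglyMeasurable]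
        simp only [X, hsurv]

end IPCW

section QuantileScore

variable {p : ℕ} (G : ℝ → ℝ) (t₀ l : ℝ) (β : Fin p → ℝ)

/-- The integrand of `μ(β)` at an uncensored observation `Y = T = t`, `Z = z`, with `x = (t, z)`. -/
noncomputable def quantileScore (x : ℝ × (Fin p → ℝ)) : Fin p → ℝ :=
  ((if x.1 ≤ t₀ then 1 else 0) / G x.1
    * ((if t₀ - Real.exp (∑ i, β i * x.2 i) ≤ x.1 then 1 else 0) - l)) • x.2

variable {G} in
lemma measurable_quantileScore (hG : Measurable G) : Measurable (quantileScore G t₀ l β) := by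
  refine (((Measurable.ite (measurableSet_le measurable_fst measurable_const) measurable_const
    measurable_const).div (hG.comp measurable_fst)).mul
    ((Measurable.ite (measurableSet_le ?_ measurable_fst) measurable_const
    measurable_const).sub measurable_const)).smul measurable_snd
  fun_prop

lemma censored_integrand_eq_ite_smul_quantileScore {t c y : ℝ} {δ : Prop} [Decidable δ] (hy : y = min t c)
    (hδ : δ ↔ t ≤ c) (z : Fin p → ℝ) :
    ((if y ≤ t₀ ∧ δ then 1 else 0) / G y
      * ((if t₀ - Real.exp (∑ i, β i * z i) ≤ y then 1 else 0) - l)) • z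
      = (if t ≤ c then (1 : ℝ) else 0) • quantileScore G t₀ l β (t, z) := by
  by_cases htc : t ≤ c
  · have hyt : y = t := hy.trans (min_eq_left htc)
    simp only [quantileScore, hyt, hδ.mpr htc, and_true, if_pos htc, one_smul]
  · simp [hδ, htc]

variable {G t₀} in
lemma survival_smul_quantileScore {t : ℝ} (hpos : t ≤ t₀ → 0 < G t) (z : Fin p → ℝ) :
    G t • quantileScore G t₀ l β (t, z)
      = ((if t₀ - t ≤ Real.exp (∑ i, β i * z i) ∧ t ≤ t₀ then 1 else 0)
          - l * (if t ≤ t₀ then 1 else 0)) • z := by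
  by_cases ht : t ≤ t₀
  · have hGt : G t ≠ 0 := (hpos ht).ne'
    simp only [quantileScore, smul_smul, ht, and_true, if_true, sub_le_comm (a := t₀)]
    congr 1
    field_simp
  · simp [quantileScore, ht]

end QuantileScore

theorem stmt15_general {Ω : Type*} [MeasurableSpace Ω] [StandardBorelSpace Ω]
    (μ : Measure Ω) [IsProbabilityMeasure μ] {p : ℕ}
    (T C : Ω → ℝ) (Z : Ω → Fin p → ℝ)
    (hT : Measurable T) (hC : Measurable C) (hZ : Measurable Z)
    (Y : Ω → ℝ) (hY : ∀ ω, Y ω = min (T ω) (C ω))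
    (Δ : Ω → Prop) (hΔ : ∀ ω, Δ ω ↔ T ω ≤ C ω)
    (N : Ω → ℝ → ℝ) (hN : ∀ ω t, N ω t = if Y ω ≤ t ∧ Δ ω then 1 else 0)
    (G : ℝ → ℝ) (hG : ∀ t, G t = (μ {ω | t ≤ C ω}).toReal)
    (t₀ : ℝ) (l : ℝ) (β₀ : Fin p → ℝ)
    (hCI : CondIndepFun (MeasurableSpace.comap Z inferInstance) hZ.comap_le T C μ)
    (hCZ : IndepFun C Z μ)
    (hpos : ∀ t ≤ t₀, 0 < G t)
    (hint : Integrable (fun ω => ‖Z ω‖ / G (Y ω)) μ)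
    (hmodel : (μ[Set.indicator {ω' | t₀ - T ω' ≤ Real.exp (∑ i, β₀ i * Z ω' i) ∧ T ω' ≤ t₀}
          (fun _ => (1 : ℝ)) | MeasurableSpace.comap Z inferInstance])
        =ᵐ[μ] fun ω => l * (μ[Set.indicator {ω' | T ω' ≤ t₀} (fun _ => (1 : ℝ)) |
          MeasurableSpace.comap Z inferInstance]) ω) :
    ∫ ω, ((N ω t₀ / G (Y ω))
          * ((if t₀ - Real.exp (∑ i, β₀ i * Z ω i) ≤ Y ω then 1 else 0) - l)) • Z ω ∂μ
      = 0 := by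
  set A := {ω' | t₀ - T ω' ≤ Real.exp (∑ i, β₀ i * Z ω' i) ∧ T ω' ≤ t₀}
  set B := {ω' | T ω' ≤ t₀}
  have hBmeas : MeasurableSet B := measurableSet_le hT measurable_const
  have hAmeas : MeasurableSet A :=
    (measurableSet_le (measurable_const.sub hT) (by fun_prop)).inter hBmeas
  have hGmeas : Measurable G :=
    funext hG ▸ (antitone_measureReal_setOf_le μ C).measurable
  have hZB : IntegrableOn Z B μ := integrableOn_of_integrable_norm_div hZ.aestronglyMeasurable
    hint hBmeas fun ω hω => ⟨hpos _ ((hY ω ▸ min_le_left _ _).trans hω), hG _ ▸ measureReal_le_one⟩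
  have hweight : ∀ ω, G (T ω) • quantileScore G t₀ l β₀ (T ω, Z ω)
      = (A.indicator (fun _ => 1) ω - l * B.indicator (fun _ => 1) ω) • Z ω := fun ω => by
    rw [survival_smul_quantileScore l β₀ (hpos _) (Z ω)]
    simp only [Set.indicator_apply, A, B, Set.mem_ofPred_eq]
  have hscore := integrable_indicator_sub_mul_indicator_smul hAmeas hBmeas (fun _ h => h.2) hZB l
  calc _ = ∫ ω, (if T ω ≤ C ω then (1 : ℝ) else 0) • quantileScore G t₀ l β₀ (T ω, Z ω) ∂μ := by
        simp only [hN, censored_integrand_eq_ite_smul_quantileScore G t₀ l β₀ (hY _) (hΔ _)]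
    _ = ∫ ω, G (T ω) • quantileScore G t₀ l β₀ (T ω, Z ω) ∂μ := by
        simp only [hG, ← measureReal_def] at hweight ⊢
        exact integral_ite_le_smul_eq_of_indepFun hT hC hZ
          (indepFun_prodMk_of_condIndepFun hT hC hZ hCI hCZ)
          (measurable_quantileScore t₀ l β₀ hGmeas).stronglyMeasurable
          (hscore.congr (.of_forall fun ω => (hweight ω).symm))
    _ = ∫ ω, (A.indicator (fun _ => 1) ω - l * B.indicator (fun _ => 1) ω) • Z ω ∂μ := by
        simp only [hweight]
    _ = 0 := integral_sub_mul_smul_eq_zero_of_condExp hZ.comap_le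
        (comap_measurable Z).aestronglyMeasurable ((integrable_const 1).indicator hAmeas)
        ((integrable_const 1).indicator hBmeas) hscore hmodel

/-- Under the conditional quantile model and IPCW assumptions, the
population estimating function
`μ(β) = E[ Z·(N(t₀)/G(Y))·(1{Y ≥ t₀ − exp(β'Z)} − λ) ]`, with `N(t₀) = 1{Y ≤ t₀, Δ=1}`,
satisfies `μ(β⁰) = 0` at the true parameter `β⁰`. -/
theorem stmt15 {Ω : Type*} [MeasurableSpace Ω] [StandardBorelSpace Ω] [Nonempty Ω]
    (μ : Measure Ω) [IsProbabilityMeasure μ] {p : ℕ}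
    (T C : Ω → ℝ) (Z : Ω → Fin p → ℝ)
    (hT : Measurable T) (hC : Measurable C) (hZ : Measurable Z)
    (Y : Ω → ℝ) (hY : ∀ ω, Y ω = min (T ω) (C ω))
    (Δ : Ω → Prop) (hΔ : ∀ ω, Δ ω ↔ T ω ≤ C ω)
    (N : Ω → ℝ → ℝ) (hN : ∀ ω t, N ω t = if Y ω ≤ t ∧ Δ ω then 1 else 0)
    (G : ℝ → ℝ) (hG : ∀ t, G t = (μ {ω | t ≤ C ω}).toReal)
    (t₀ : ℝ) (l : ℝ) (hl : l ∈ Set.Ioo (0 : ℝ) 1) (β₀ : Fin p → ℝ)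
    (hCI : CondIndepFun (MeasurableSpace.comap Z inferInstance) hZ.comap_le T C μ)
    (hCZ : IndepFun C Z μ)
    (hpos : ∀ t ≤ t₀, 0 < G t)
    (hint : Integrable (fun ω => ‖Z ω‖ / G (Y ω)) μ)
    (hmodel : (μ[Set.indicator {ω' | t₀ - T ω' ≤ Real.exp (∑ i, β₀ i * Z ω' i) ∧ T ω' ≤ t₀}
          (fun _ => (1 : ℝ)) | MeasurableSpace.comap Z inferInstance])
        =ᵐ[μ] fun ω => l * (μ[Set.indicator {ω' | T ω' ≤ t₀} (fun _ => (1 : ℝ)) |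
          MeasurableSpace.comap Z inferInstance]) ω) :
    ∫ ω, ((N ω t₀ / G (Y ω))
          * ((if t₀ - Real.exp (∑ i, β₀ i * Z ω i) ≤ Y ω then 1 else 0) - l)) • Z ω ∂μ
      = 0 :=
  stmt15_general μ T C Z hT hC hZ Y hY Δ hΔ N hN G hG t₀ l β₀ hCI hCZ hpos hint hmodel
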